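/- arXiv:1603.00109 — 2 statements merged into one kernel-verified Lean document; each statement's English description precedes it below -/
import Mathlib

section
/- Let R = K⟨x,y⟩/(xy−1) and f_n = y^{n−1}x^{n−1} − y^n x^n. Then for every n ≥ 1 the left R-modules Rf_n and Rf_1 are isomorphic, via an isomorphism sending f_1 to x^{n−1}f_n. -/
noncomputable section

/-- The defining relation of the Toeplitz/Jacobson algebra: `x * y = 1`. -/
inductive ToeplitzRel (K : Type*) [Field K] :
    FreeAlgebra K (Fin 2) → FreeAlgebra K (Fin 2) → Prop
  | rel : ToeplitzRel K (FreeAlgebra.ι K 0 * FreeAlgebra.ι K 1) 1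

/-- The Toeplitz/Jacobson algebra `R = K⟨x,y⟩/(xy-1)`. -/
abbrev Toeplitz (K : Type*) [Field K] := RingQuot (ToeplitzRel K)

variable (K : Type*) [Field K]

/-- The image of the generator `x` in `R`. -/
def tx : Toeplitz K := RingQuot.mkAlgHom K (ToeplitzRel K) (FreeAlgebra.ι K 0)

/-- The image of the generator `y` in `R`. -/
def ty : Toeplitz K := RingQuot.mkAlgHom K (ToeplitzRel K) (FreeAlgebra.ι K 1)

/-- `f n = y^(n-1) x^(n-1) - y^n x^n`. -/
def tf (n : ℕ) : Toeplitz K := ty K ^ (n-1) * tx K ^ (n-1) - ty K ^ n * tx K ^ n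

/-- Right multiplication by a fixed element, as a left-module endomorphism. -/
def rmul (c : Toeplitz K) : Toeplitz K →ₗ[Toeplitz K] Toeplitz K where
  toFun r := r * c
  map_add' a b := add_mul a b c
  map_smul' r s := by simp [smul_eq_mul, mul_assoc]

lemma txty : tx K * ty K = 1 := by
  rw [tx, ty, ← map_mul, ← map_one (RingQuot.mkAlgHom K (ToeplitzRel K))]
  exact RingQuot.mkAlgHom_rel K ToeplitzRel.rel

lemma txty_pow (k : ℕ) : tx K ^ k * ty K ^ k = 1 := by
  induction k with
  | zero => simp
  | succ k ih =>
    rw [pow_succ, pow_succ']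
    calc tx K ^ k * tx K * (ty K * ty K ^ k)
        = tx K ^ k * (tx K * ty K) * ty K ^ k := by noncomm_ring
      _ = 1 := by rw [txty]; simpa using ih

lemma tf_one : tf K 1 = 1 - ty K * tx K := by simp [tf]

lemma tf_idem_one : tf K 1 * tf K 1 = tf K 1 := by
  rw [tf_one]
  have hv : ty K * tx K * (ty K * tx K) = ty K * tx K := by
    calc ty K * tx K * (ty K * tx K) = ty K * (tx K * ty K) * tx K := by noncomm_ring
      _ = ty K * tx K := by rw [txty]; noncomm_ring
  rw [mul_sub, mul_one, sub_mul, one_mul, hv, sub_self, sub_zero]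

lemma tf_eq (m : ℕ) : tf K (m + 1) = ty K ^ m * tf K 1 * tx K ^ m := by
  rw [tf_one, tf]
  simp only [Nat.add_sub_cancel]
  rw [pow_succ, pow_succ', mul_sub, mul_one, sub_mul, mul_assoc, mul_assoc, mul_assoc]

lemma x_tf (m : ℕ) : tx K ^ m * tf K (m + 1) = tf K 1 * tx K ^ m := by
  rw [tf_eq, ← mul_assoc, ← mul_assoc, txty_pow, one_mul]

/-- For every `n ≥ 1`, `Rf_n ≅ Rf_1` as left `R`-modules, via an isomorphism sending
`f_1` to `x^(n-1) f_n`. -/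
theorem toeplitz_Sn_iso_S1 (n : ℕ) (hn : 1 ≤ n) :
    ∃ e : Submodule.span (Toeplitz K) {tf K 1} ≃ₗ[Toeplitz K]
        Submodule.span (Toeplitz K) {tf K n},
      (e ⟨tf K 1, Submodule.mem_span_singleton_self _⟩ : Toeplitz K) =
        tx K ^ (n - 1) * tf K n := by
  obtain ⟨m, rfl⟩ : ∃ m, n = m + 1 := ⟨n - 1, (Nat.succ_pred_eq_of_pos hn).symm⟩
  set a : Toeplitz K := tx K ^ m * tf K (m + 1) with ha
  set b : Toeplitz K := ty K ^ m * tf K 1 with hb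
  -- key identities
  have hab : a * b = tf K 1 := by
    rw [ha, hb, x_tf]
    calc tf K 1 * tx K ^ m * (ty K ^ m * tf K 1)
        = tf K 1 * (tx K ^ m * ty K ^ m) * tf K 1 := by noncomm_ring
      _ = tf K 1 := by rw [txty_pow, mul_one, tf_idem_one]
  have hba : b * a = tf K (m + 1) := by
    rw [ha, hb, x_tf]
    calc ty K ^ m * tf K 1 * (tf K 1 * tx K ^ m)
        = ty K ^ m * (tf K 1 * tf K 1) * tx K ^ m := by noncomm_ring
      _ = tf K (m + 1) := by rw [tf_idem_one, ← tf_eq]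
  have hfa : tf K 1 * a = a := by
    rw [ha, x_tf, ← mul_assoc, tf_idem_one]
  have hfb : tf K (m + 1) * b = b := by
    conv_lhs => rw [tf_eq, hb]
    calc ty K ^ m * tf K 1 * tx K ^ m * (ty K ^ m * tf K 1)
        = ty K ^ m * tf K 1 * (tx K ^ m * ty K ^ m) * tf K 1 := by noncomm_ring
      _ = ty K ^ m * (tf K 1 * tf K 1) := by rw [txty_pow]; noncomm_ring
      _ = b := by rw [tf_idem_one, hb]
  -- the two restricted maps
  have hmapa : ∀ v ∈ Submodule.span (Toeplitz K) {tf K 1},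
      rmul K a v ∈ Submodule.span (Toeplitz K) {tf K (m + 1)} := by
    intro v hv
    obtain ⟨r, rfl⟩ := Submodule.mem_span_singleton.mp hv
    refine Submodule.mem_span_singleton.mpr ⟨r * tx K ^ m, ?_⟩
    show (r * tx K ^ m) * tf K (m + 1) = (r • tf K 1) * a
    rw [smul_eq_mul, mul_assoc, mul_assoc, hfa, ha]
  have hmapb : ∀ v ∈ Submodule.span (Toeplitz K) {tf K (m + 1)},
      rmul K b v ∈ Submodule.span (Toeplitz K) {tf K 1} := by
    intro v hv
    obtain ⟨r, rfl⟩ := Submodule.mem_span_singleton.mp hv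
    refine Submodule.mem_span_singleton.mpr ⟨r * ty K ^ m, ?_⟩
    show (r * ty K ^ m) * tf K 1 = (r • tf K (m + 1)) * b
    rw [smul_eq_mul, mul_assoc, mul_assoc, hfb, hb]
  set φ := (rmul K a).restrict hmapa with hφ
  set ψ := (rmul K b).restrict hmapb with hψ
  have h1 : φ.comp ψ = LinearMap.id := by
    ext v
    obtain ⟨r, hr⟩ := Submodule.mem_span_singleton.mp v.2
    have : (v : Toeplitz K) * b * a = v := by
      rw [← hr, smul_eq_mul, mul_assoc, mul_assoc, ← mul_assoc (tf K (m+1)), hfb, hba]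
    simpa [hφ, hψ, LinearMap.restrict_apply, rmul] using this
  have h2 : ψ.comp φ = LinearMap.id := by
    ext v
    obtain ⟨r, hr⟩ := Submodule.mem_span_singleton.mp v.2
    have : (v : Toeplitz K) * a * b = v := by
      rw [← hr, smul_eq_mul, mul_assoc, mul_assoc, ← mul_assoc (tf K 1), hfa, hab]
    simpa [hφ, hψ, LinearMap.restrict_apply, rmul] using this
  refine ⟨LinearEquiv.ofLinear φ ψ h1 h2, ?_⟩
  show tf K 1 * a = tx K ^ m * tf K (m + 1)
  rw [hfa, ha]
end
end

section
/- Let T be a simple left module over R = K⟨x,y⟩/(xy−1). Then either T is annihilated by the two-sided ideal I = ⟨1−yx⟩ (hence T is a simple module over K[X,X^{-1}]), or T is isomorphic to the left ideal S₁ = R(1−yx). -/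
/-! Let `R` act on `V = ℕ →₀ K` with `x` shifting the basis `(eₙ)` down (killing `e₀`) and
`y` shifting it up. `V` is simple: `x ^ n`, for `n` the top of the support, moves a nonzero vector
to a multiple of `e₀`, and `e₀` generates `V` under the powers of `y`. Since `x (1 - yx) = 0`, the
map `eₙ ↦ yⁿ (1 - yx)` is `R`-linear; it is injective as `V` is simple, and its image is `S₁`, so
`S₁` is simple. Now let `T` be simple. If `1 - yx` kills `T`, so does `I`, because annihilators
are two-sided ideals. Otherwise `(1 - yx) • t ≠ 0` for some `t`, and `s ↦ s • t` is a nonzero map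
`S₁ → T` between simple modules, an isomorphism by Schur's lemma. -/

noncomputable section

variable (K : Type*) [Field K]

namespace Toeplitz

variable {K}

theorem tx_mul_ty : tx K * ty K = 1 := by
  rw [tx, ty, ← map_mul, RingQuot.mkAlgHom_rel K ToeplitzRel.rel, map_one]

theorem tx_mul_one_sub_ty_mul_tx : tx K * (1 - ty K * tx K) = 0 := by
  rw [mul_sub, mul_one, ← mul_assoc, tx_mul_ty, one_mul, sub_self]

@[elab_as_elim]
theorem induction_on {P : Toeplitz K → Prop} (r : Toeplitz K)
    (algebraMap : ∀ c : K, P (algebraMap K (Toeplitz K) c)) (tx : P (tx K))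
    (ty : P (ty K)) (add : ∀ a b, P a → P b → P (a + b))
    (mul : ∀ a b, P a → P b → P (a * b)) : P r := by
  obtain ⟨a, rfl⟩ := RingQuot.mkAlgHom_surjective K (ToeplitzRel K) r
  induction a with
  | grade0 c => rw [AlgHom.commutes]; exact algebraMap c
  | grade1 i => fin_cases i <;> assumption
  | mul a b ha hb => rw [map_mul]; exact mul _ _ ha hb
  | add a b ha hb => rw [map_add]; exact add _ _ ha hb

def shiftRep : Toeplitz K →ₐ[K] Module.End K (ℕ →₀ K) :=
  RingQuot.liftAlgHom K ⟨FreeAlgebra.lift K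
    ![Finsupp.lcomapDomain Nat.succ Nat.succ_injective, Finsupp.lmapDomain K K Nat.succ], by
    rintro _ _ ⟨⟩
    refine LinearMap.ext fun v => ?_
    simp only [map_mul, map_one, FreeAlgebra.lift_ι_apply, Matrix.cons_val_zero,
      Matrix.cons_val_one, Module.End.mul_apply, Module.End.one_apply]
    exact Finsupp.leftInverse_lcomapDomain_mapDomain _ _ v⟩

instance : Module (Toeplitz K) (ℕ →₀ K) := Module.compHom _ (shiftRep (K := K)).toRingHom

theorem smul_def (r : Toeplitz K) (v : ℕ →₀ K) : r • v = shiftRep r v := rfl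

instance : IsScalarTower K (Toeplitz K) (ℕ →₀ K) :=
  ⟨fun c r v => by rw [smul_def, smul_def, map_smul, LinearMap.smul_apply]⟩

theorem tx_smul_apply (v : ℕ →₀ K) (n : ℕ) : (tx K • v) n = v (n + 1) := by
  rw [smul_def, tx, shiftRep, RingQuot.liftAlgHom_mkAlgHom_apply, FreeAlgebra.lift_ι_apply]
  rfl

theorem ty_smul_single (n : ℕ) (c : K) :
    ty K • Finsupp.single n c = Finsupp.single (n + 1) c := by
  rw [smul_def, ty, shiftRep, RingQuot.liftAlgHom_mkAlgHom_apply, FreeAlgebra.lift_ι_apply]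
  exact Finsupp.mapDomain_single

theorem tx_smul_single_zero (c : K) : tx K • Finsupp.single 0 c = 0 := by
  ext n
  simp [tx_smul_apply]

theorem tx_smul_single_succ (n : ℕ) (c : K) :
    tx K • Finsupp.single (n + 1) c = Finsupp.single n c := by
  ext m
  simp [tx_smul_apply, Finsupp.single_apply]

theorem tx_pow_smul_apply (k : ℕ) (v : ℕ →₀ K) (n : ℕ) : (tx K ^ k • v) n = v (n + k) := by
  induction k generalizing v n with
  | zero => simp
  | succ k ih => rw [pow_succ, mul_smul, ih, tx_smul_apply, add_assoc]

theorem ty_pow_smul_single (k n : ℕ) (c : K) :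
    ty K ^ k • Finsupp.single n c = Finsupp.single (n + k) c := by
  induction k with
  | zero => simp
  | succ k ih => rw [pow_succ', mul_smul, ih, ty_smul_single, add_assoc]

theorem one_sub_ty_mul_tx_smul_single_zero (c : K) :
    (1 - ty K * tx K) • Finsupp.single 0 c = Finsupp.single 0 c := by
  rw [sub_smul, one_smul, mul_smul, tx_smul_single_zero, smul_zero, sub_zero]

theorem one_sub_ty_mul_tx_ne_zero : (1 : Toeplitz K) - ty K * tx K ≠ 0 := fun h => by
  have := one_sub_ty_mul_tx_smul_single_zero (1 : K)
  rw [h, zero_smul, eq_comm, Finsupp.single_eq_zero] at this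
  exact one_ne_zero this

theorem exists_smul_eq_single_zero {v : ℕ →₀ K} (hv : v ≠ 0) :
    ∃ r : Toeplitz K, r • v = Finsupp.single 0 1 := by
  have hsupp : v.support.Nonempty := Finsupp.support_nonempty_iff.mpr hv
  set n := v.support.max' hsupp
  have hvn : v n ≠ 0 := Finsupp.mem_support_iff.mp (v.support.max'_mem hsupp)
  refine ⟨algebraMap K _ (v n)⁻¹ * tx K ^ n, ?_⟩
  ext (_ | m)
  · simp [mul_smul, algebraMap_smul, tx_pow_smul_apply, inv_mul_cancel₀ hvn]
  · have hvanish : v (m + 1 + n) = 0 :=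
      Finsupp.notMem_support_iff.mp fun h => by
        have := v.support.le_max' _ h
        omega
    simp [mul_smul, algebraMap_smul, tx_pow_smul_apply, hvanish]

theorem span_single_zero_one_eq_top :
    Submodule.span (Toeplitz K) {Finsupp.single 0 (1 : K)} = ⊤ := by
  rw [eq_top_iff]
  rintro w -
  induction w using Finsupp.induction_linear with
  | zero => exact zero_mem _
  | add f g hf hg => exact add_mem hf hg
  | single n c =>
    have hsingle : (algebraMap K _ c * ty K ^ n) • Finsupp.single 0 1 = Finsupp.single n c := by
      rw [mul_smul, ty_pow_smul_single, algebraMap_smul, Finsupp.smul_single_one, zero_add]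
    exact hsingle ▸ Submodule.smul_mem _ _ (Submodule.mem_span_singleton_self _)

instance : IsSimpleModule (Toeplitz K) (ℕ →₀ K) := by
  refine isSimpleModule_iff_toSpanSingleton_surjective.mpr
    ⟨⟨Finsupp.single 0 1, 0, by simp⟩, fun v hv w => ?_⟩
  obtain ⟨r, hr⟩ := exists_smul_eq_single_zero hv
  obtain ⟨s, hs⟩ :=
    (Submodule.span_singleton_eq_top_iff _ _).mp span_single_zero_one_eq_top w
  exact ⟨s * r, by rw [LinearMap.toSpanSingleton_apply, mul_smul, hr, hs]⟩

theorem map_smul_of_map_tx_smul_of_map_ty_smul {M N : Type*} [AddCommGroup M] [Module K M]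
    [Module (Toeplitz K) M] [IsScalarTower K (Toeplitz K) M] [AddCommGroup N] [Module K N]
    [Module (Toeplitz K) N] [IsScalarTower K (Toeplitz K) N] (f : M →ₗ[K] N)
    (hx : ∀ m, f (tx K • m) = tx K • f m) (hy : ∀ m, f (ty K • m) = ty K • f m)
    (r : Toeplitz K) (m : M) : f (r • m) = r • f m := by
  induction r using induction_on generalizing m with
  | algebraMap c => rw [algebraMap_smul, algebraMap_smul, map_smul]
  | tx => exact hx m
  | ty => exact hy m
  | add a b ha hb => rw [add_smul, map_add, ha, hb, add_smul]
  | mul a b ha hb => rw [mul_smul, ha, hb, mul_smul]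

def tyPowMul : (ℕ →₀ K) →ₗ[Toeplitz K] Toeplitz K where
  __ := Finsupp.linearCombination K fun n => ty K ^ n * (1 - ty K * tx K)
  map_smul' := map_smul_of_map_tx_smul_of_map_ty_smul _
    (fun v => by
      induction v using Finsupp.induction_linear with
      | zero => simp
      | add f g hf hg => rw [smul_add, map_add, map_add, hf, hg, smul_add]
      | single n c =>
        cases n with
        | zero =>
          rw [tx_smul_single_zero, map_zero, Finsupp.linearCombination_single, smul_eq_mul,
            mul_smul_comm, pow_zero, one_mul, tx_mul_one_sub_ty_mul_tx, smul_zero]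
        | succ n =>
          rw [tx_smul_single_succ, Finsupp.linearCombination_single,
            Finsupp.linearCombination_single, smul_eq_mul, mul_smul_comm, pow_succ',
            ← mul_assoc, ← mul_assoc, tx_mul_ty, one_mul])
    (fun v => by
      induction v using Finsupp.induction_linear with
      | zero => simp
      | add f g hf hg => rw [smul_add, map_add, map_add, hf, hg, smul_add]
      | single n c =>
        rw [ty_smul_single, Finsupp.linearCombination_single, Finsupp.linearCombination_single,
          smul_eq_mul, mul_smul_comm, ← mul_assoc, ← pow_succ'])

theorem tyPowMul_single (n : ℕ) (c : K) :
    tyPowMul (Finsupp.single n c) = c • (ty K ^ n * (1 - ty K * tx K)) :=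
  Finsupp.linearCombination_single K c n

theorem range_tyPowMul :
    LinearMap.range (tyPowMul (K := K)) = Submodule.span (Toeplitz K) {1 - ty K * tx K} := by
  rw [LinearMap.range_eq_map, ← span_single_zero_one_eq_top, Submodule.map_span,
    Set.image_singleton, tyPowMul_single, pow_zero, one_mul, one_smul]

theorem injective_tyPowMul : Function.Injective (tyPowMul (K := K)) :=
  LinearMap.injective_of_ne_zero fun h => one_sub_ty_mul_tx_ne_zero (K := K) <| by
    simpa [tyPowMul_single] using LinearMap.congr_fun h (Finsupp.single 0 1)

def shiftEquivSpan :
    (ℕ →₀ K) ≃ₗ[Toeplitz K] Submodule.span (Toeplitz K) {1 - ty K * tx K} :=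
  (LinearEquiv.ofInjective _ injective_tyPowMul).trans (LinearEquiv.ofEq _ _ range_tyPowMul)

instance : IsSimpleModule (Toeplitz K) (Submodule.span (Toeplitz K) {1 - ty K * tx K}) :=
  IsSimpleModule.congr shiftEquivSpan.symm

end Toeplitz

theorem TwoSidedIdeal.smul_eq_zero_of_mem_span_singleton {R M : Type*} [Ring R] [AddCommGroup M]
    [Module R M] {e : R} (he : ∀ m : M, e • m = 0) :
    ∀ a ∈ TwoSidedIdeal.span {e}, ∀ m : M, a • m = 0 := fun a ha => by
  have hspan : TwoSidedIdeal.span {e} ≤ (Module.annihilator R M).toTwoSided :=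
    TwoSidedIdeal.span_le.mpr <| Set.singleton_subset_iff.mpr <|
      Ideal.mem_toTwoSided.mpr <| Module.mem_annihilator.mpr he
  exact Module.mem_annihilator.mp <| Ideal.mem_toTwoSided.mp <| hspan ha

theorem IsSimpleModule.forall_mem_span_smul_eq_zero_or_nonempty_linearEquiv {R : Type*} [Ring R]
    (e : R) [IsSimpleModule R (Submodule.span R {e})] (M : Type*) [AddCommGroup M] [Module R M]
    [IsSimpleModule R M] :
    (∀ a ∈ TwoSidedIdeal.span {e}, ∀ m : M, a • m = 0) ∨
      Nonempty (M ≃ₗ[R] Submodule.span R {e}) := by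
  by_cases he : ∀ m : M, e • m = 0
  · exact .inl (TwoSidedIdeal.smul_eq_zero_of_mem_span_singleton he)
  · push Not at he
    obtain ⟨m, hm⟩ := he
    let f := (LinearMap.toSpanSingleton R M m).comp (Submodule.span R {e}).subtype
    have hf : f ≠ 0 := fun h =>
      hm <| LinearMap.congr_fun h ⟨e, Submodule.mem_span_singleton_self e⟩
    exact .inr ⟨(LinearEquiv.ofBijective f (LinearMap.bijective_of_ne_zero hf)).symm⟩

/-- Every simple left `R`-module is either annihilated by the two-sided ideal
`I = ⟨1-yx⟩` (hence a simple module over `R/I ≅ K[X,X⁻¹]`), or isomorphic to the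
left ideal `S₁ = R(1-yx)`. -/
theorem toeplitz_simple_module_classification
    (T : Type*) [AddCommGroup T] [Module (Toeplitz K) T]
    [IsSimpleModule (Toeplitz K) T] :
    (∀ a ∈ TwoSidedIdeal.span {1 - ty K * tx K}, ∀ t : T, a • t = 0) ∨
    Nonempty (T ≃ₗ[Toeplitz K]
      Submodule.span (Toeplitz K) {1 - ty K * tx K}) :=
  IsSimpleModule.forall_mem_span_smul_eq_zero_or_nonempty_linearEquiv _ T

end
end
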